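/- arXiv:1712.08389 — 2 statements merged into one kernel-verified Lean document; each statement's English description precedes it below -/
import Mathlib

section
/- Let (E,Fᵢ), i=1,...,m, be matroids on a finite set E admitting a partition E = I₁ ∪ ... ∪ I_m with Iᵢ ∈ Fᵢ, where F_m = F^{(l,E)} is the uniform matroid of rank l ≥ 1. Suppose E ∈ G = {A ⊆ E : |A| = l + Σ_{i=1}^{m-1} rᵢ(A)}, and let A_min be the unique minimal element of G under inclusion. Then A_min equals A_par := {b ∈ E : there exists a partition E = I₁ ∪ ... ∪ I_m with Iᵢ ∈ Fᵢ and b ∈ I_m}. -/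
/-- A matroid in the sense of the paper. -/
structure PaperMatroid (α : Type*) [DecidableEq α] [Fintype α] where
  Indep : Finset α → Prop
  nonempty : ∃ I, Indep I
  subset_closed : ∀ ⦃I J : Finset α⦄, Indep I → J ⊆ I → Indep J
  max_card_eq : ∀ (A I₁ I₂ : Finset α),
    I₁ ⊆ A → Indep I₁ → (∀ J, J ⊆ A → Indep J → I₁ ⊆ J → J = I₁) →
    I₂ ⊆ A → Indep I₂ → (∀ J, J ⊆ A → Indep J → I₂ ⊆ J → J = I₂) →
    I₁.card = I₂.card

/-- `I` is a maximal independent subset of `A`. -/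
def PaperMatroid.MaxIndepIn {α : Type*} [DecidableEq α] [Fintype α]
    (M : PaperMatroid α) (A I : Finset α) : Prop :=
  I ⊆ A ∧ M.Indep I ∧ ∀ J, J ⊆ A → M.Indep J → I ⊆ J → J = I

namespace PaperMatroid

variable {α : Type*} [DecidableEq α] [Fintype α] (M : PaperMatroid α)

lemma indep_empty : M.Indep ∅ := by
  obtain ⟨J, hJ⟩ := M.nonempty
  exact M.subset_closed hJ (Finset.empty_subset J)

lemma exists_maxIndepIn_superset {S A : Finset α} (hSA : S ⊆ A) (hS : M.Indep S) :
    ∃ J, S ⊆ J ∧ M.MaxIndepIn A J := by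
  classical
  -- pick a maximum-cardinality independent superset of S inside A
  set 𝒥 : Finset (Finset α) := A.powerset.filter (fun J => S ⊆ J ∧ M.Indep J) with h𝒥
  have hne : 𝒥.Nonempty := ⟨S, by simp [h𝒥, hSA, hS]⟩
  obtain ⟨J, hJmem, hJmax⟩ := 𝒥.exists_max_image Finset.card hne
  simp only [h𝒥, Finset.mem_filter, Finset.mem_powerset] at hJmem
  refine ⟨J, hJmem.2.1, hJmem.1, hJmem.2.2, ?_⟩
  intro J' hJ'A hJ' hJJ'
  have hmem' : J' ∈ 𝒥 := by
    simp only [h𝒥, Finset.mem_filter, Finset.mem_powerset]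
    exact ⟨hJ'A, hJmem.2.1.trans hJJ', hJ'⟩
  exact (Finset.eq_of_subset_of_card_le hJJ' (hJmax J' hmem')).symm

lemma exists_maxIndepIn (A : Finset α) : ∃ J, M.MaxIndepIn A J := by
  obtain ⟨J, _, hJ⟩ := M.exists_maxIndepIn_superset (Finset.empty_subset A) M.indep_empty
  exact ⟨J, hJ⟩

noncomputable def rk (A : Finset α) : ℕ := (M.exists_maxIndepIn A).choose.card

lemma maxIndepIn_card {A J : Finset α} (hJ : M.MaxIndepIn A J) : J.card = M.rk A := by
  have h := (M.exists_maxIndepIn A).choose_spec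
  exact M.max_card_eq A J _ hJ.1 hJ.2.1 hJ.2.2 h.1 h.2.1 h.2.2

lemma card_le_rk {A S : Finset α} (hSA : S ⊆ A) (hS : M.Indep S) : S.card ≤ M.rk A := by
  obtain ⟨J, hSJ, hJ⟩ := M.exists_maxIndepIn_superset hSA hS
  rw [← M.maxIndepIn_card hJ]
  exact Finset.card_le_card hSJ

lemma rk_le_card (A : Finset α) : M.rk A ≤ A.card := by
  have h := (M.exists_maxIndepIn A).choose_spec
  rw [← M.maxIndepIn_card h]
  exact Finset.card_le_card h.1

lemma rk_mono {A B : Finset α} (h : A ⊆ B) : M.rk A ≤ M.rk B := by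
  have hA := (M.exists_maxIndepIn A).choose_spec
  rw [← M.maxIndepIn_card hA]
  exact M.card_le_rk (hA.1.trans h) hA.2.1

lemma maxIndepIn_of_card {A J : Finset α} (hJA : J ⊆ A) (hJ : M.Indep J)
    (hcard : J.card = M.rk A) : M.MaxIndepIn A J := by
  refine ⟨hJA, hJ, fun J' hJ'A hJ' hJJ' => ?_⟩
  refine (Finset.eq_of_subset_of_card_le hJJ' ?_).symm
  rw [hcard]; exact M.card_le_rk hJ'A hJ'

lemma rk_of_indep {A : Finset α} (hA : M.Indep A) : M.rk A = A.card := by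
  have : M.MaxIndepIn A A := ⟨subset_rfl, hA, fun J hJA _ hAJ => subset_antisymm hJA hAJ⟩
  exact (M.maxIndepIn_card this).symm

lemma indep_of_rk_eq_card {A : Finset α} (h : M.rk A = A.card) : M.Indep A := by
  have hA := (M.exists_maxIndepIn A).choose_spec
  have : (M.exists_maxIndepIn A).choose = A :=
    Finset.eq_of_subset_of_card_le hA.1 (by rw [← h, M.maxIndepIn_card hA])
  rw [← this]; exact hA.2.1

lemma rk_insert_le (A : Finset α) (z : α) : M.rk (insert z A) ≤ M.rk A + 1 := by
  have hJ := (M.exists_maxIndepIn (insert z A)).choose_spec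
  set J := (M.exists_maxIndepIn (insert z A)).choose
  rw [← M.maxIndepIn_card hJ]
  have h1 : J.erase z ⊆ A := by
    intro x hx
    have := hJ.1 (Finset.mem_of_mem_erase hx)
    rcases Finset.mem_insert.1 this with h | h
    · exact absurd h (Finset.ne_of_mem_erase hx)
    · exact h
  have h2 : (J.erase z).card ≤ M.rk A := M.card_le_rk h1 (M.subset_closed hJ.2.1 (Finset.erase_subset _ _))
  by_cases hz : z ∈ J
  · have := Finset.card_erase_add_one hz
    omega
  · rw [Finset.erase_eq_self.2 hz] at h2; omega

/-- `z` is spanned by `S`. -/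
def Spans (S : Finset α) (z : α) : Prop := M.rk (insert z S) = M.rk S

lemma spans_mono {S T : Finset α} (hST : S ⊆ T) {z : α} (h : M.Spans S z) :
    M.Spans T z := by
  unfold Spans at *
  by_cases hzT : z ∈ T
  · rw [Finset.insert_eq_self.2 hzT]
  have hzS : z ∉ S := fun hz => hzT (hST hz)
  have hIs := (M.exists_maxIndepIn S).choose_spec
  set Is := (M.exists_maxIndepIn S).choose
  obtain ⟨I', hII', hI'⟩ := M.exists_maxIndepIn_superset (hIs.1.trans hST) hIs.2.1
  have hzI' : z ∉ I' := fun hz => hzT (hI'.1 hz)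
  have hmax : M.MaxIndepIn (insert z T) I' := by
    refine ⟨hI'.1.trans (Finset.subset_insert _ _), hI'.2.1, fun J hJT hJ hI'J => ?_⟩
    by_cases hzJ : z ∈ J
    · exfalso
      have hind : M.Indep (insert z I') := M.subset_closed hJ (Finset.insert_subset hzJ hI'J)
      have hind2 : M.Indep (insert z Is) :=
        M.subset_closed hind (Finset.insert_subset_insert _ hII')
      have hsub : insert z Is ⊆ insert z S := Finset.insert_subset_insert _ hIs.1
      have hc := M.card_le_rk hsub hind2
      rw [h, ← M.maxIndepIn_card hIs] at hc
      have hzIs : z ∉ Is := fun hz => hzS (hIs.1 hz)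
      rw [Finset.card_insert_of_notMem hzIs] at hc
      omega
    · apply hI'.2.2 J _ hJ hI'J
      intro x hx
      rcases Finset.mem_insert.1 (hJT hx) with h' | h'
      · exact absurd (h' ▸ hx) hzJ
      · exact h'
  rw [← M.maxIndepIn_card hmax, M.maxIndepIn_card hI']

lemma indep_insert_iff {J : Finset α} (hJ : M.Indep J) {z : α} (hz : z ∉ J) :
    M.Indep (insert z J) ↔ ¬ M.Spans J z := by
  constructor
  · intro hind hsp
    have := M.card_le_rk (subset_rfl : insert z J ⊆ insert z J) hind
    rw [hsp, M.rk_of_indep hJ, Finset.card_insert_of_notMem hz] at this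
    omega
  · intro hsp
    have h1 : M.rk (insert z J) ≤ M.rk J + 1 := M.rk_insert_le J z
    have h2 : M.rk J ≤ M.rk (insert z J) := M.rk_mono (Finset.subset_insert _ _)
    have h3 : M.rk (insert z J) ≠ M.rk J := fun h => hsp h
    have : M.rk (insert z J) = J.card + 1 := by rw [M.rk_of_indep hJ] at *; omega
    apply M.indep_of_rk_eq_card
    rw [this, Finset.card_insert_of_notMem hz]

lemma indep_insert {J : Finset α} (hJ : M.Indep J) {z : α} (h : ¬ M.Spans J z) :
    M.Indep (insert z J) := by
  by_cases hz : z ∈ J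
  · rwa [Finset.insert_eq_self.2 hz]
  · exact (M.indep_insert_iff hJ hz).2 h

lemma spans_of_dep_insert {J : Finset α} (hJ : M.Indep J) {z : α}
    (h : ¬ M.Indep (insert z J)) : M.Spans J z := by
  by_contra hsp
  exact h (M.indep_insert hJ hsp)

lemma dep_insert_of_spans {J : Finset α} (hJ : M.Indep J) {z : α} (hz : z ∉ J)
    (h : M.Spans J z) : ¬ M.Indep (insert z J) := by
  intro hind
  exact ((M.indep_insert_iff hJ hz).1 hind) h

lemma spans_insert_eq {S : Finset α} {z e : α} (hz : M.Spans S z)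
    (he : M.Spans (insert z S) e) : M.Spans S e := by
  unfold Spans at *
  have h1 : M.rk (insert e S) ≤ M.rk (insert e (insert z S)) :=
    M.rk_mono (Finset.insert_subset_insert _ (Finset.subset_insert _ _))
  have h2 : M.rk S ≤ M.rk (insert e S) := M.rk_mono (Finset.subset_insert _ _)
  omega

lemma rk_submodular (A B : Finset α) :
    M.rk (A ∪ B) + M.rk (A ∩ B) ≤ M.rk A + M.rk B := by
  obtain ⟨Ii, hIi⟩ := M.exists_maxIndepIn (A ∩ B)
  obtain ⟨Iu, hIiIu, hIu⟩ := M.exists_maxIndepIn_superset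
    (hIi.1.trans (Finset.inter_subset_left.trans Finset.subset_union_left)) hIi.2.1
  have hIuAB : Iu ⊆ A ∪ B := hIu.1
  have hinter : Iu ∩ (A ∩ B) = Ii := by
    apply hIi.2.2
    · exact Finset.inter_subset_right
    · exact M.subset_closed hIu.2.1 Finset.inter_subset_left
    · exact Finset.subset_inter hIiIu hIi.1
  have hcards : (Iu ∩ A).card + (Iu ∩ B).card = Iu.card + (Iu ∩ (A ∩ B)).card := by
    rw [← Finset.card_union_add_card_inter]
    have h1 : Iu ∩ A ∪ Iu ∩ B = Iu := by
      rw [← Finset.inter_union_distrib_left]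
      exact Finset.inter_eq_left.2 hIuAB
    have h2 : Iu ∩ A ∩ (Iu ∩ B) = Iu ∩ (A ∩ B) := by
      ext x; simp [Finset.mem_inter]; tauto
    rw [h1, h2]
  have hA : (Iu ∩ A).card ≤ M.rk A :=
    M.card_le_rk Finset.inter_subset_right (M.subset_closed hIu.2.1 Finset.inter_subset_left)
  have hB : (Iu ∩ B).card ≤ M.rk B :=
    M.card_le_rk Finset.inter_subset_right (M.subset_closed hIu.2.1 Finset.inter_subset_left)
  have hu : Iu.card = M.rk (A ∪ B) := M.maxIndepIn_card hIu
  have hi : (Iu ∩ (A ∩ B)).card = M.rk (A ∩ B) := by rw [hinter, M.maxIndepIn_card hIi]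
  omega

/-- Lemma Y: circuit avoidance. -/
lemma spans_sdiff_pair {I : Finset α} (hI : M.Indep I) {x x' z : α}
    (hx : x ∈ I) (hx' : x' ∈ I) (hxx' : x ≠ x') (hzI : z ∉ I)
    (h1 : M.Spans (I.erase x) z) (h2 : M.Spans (I.erase x') z) :
    M.Spans ((I.erase x).erase x') z := by
  unfold Spans at *
  have hIx : M.Indep (I.erase x) := M.subset_closed hI (Finset.erase_subset _ _)
  have hIx' : M.Indep (I.erase x') := M.subset_closed hI (Finset.erase_subset _ _)
  have hIxx' : M.Indep ((I.erase x).erase x') := M.subset_closed hIx (Finset.erase_subset _ _)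
  have hcx : (I.erase x).card = I.card - 1 := Finset.card_erase_of_mem hx
  have hcx' : (I.erase x').card = I.card - 1 := Finset.card_erase_of_mem hx'
  have hcxx' : ((I.erase x).erase x').card = I.card - 2 := by
    rw [Finset.card_erase_of_mem (Finset.mem_erase.2 ⟨hxx'.symm, hx'⟩), hcx]
    have : 1 ≤ I.card := Finset.card_pos.2 ⟨x, hx⟩
    omega
  have hunion : insert z (I.erase x) ∪ insert z (I.erase x') = insert z I := by
    ext y
    simp only [Finset.mem_union, Finset.mem_insert, Finset.mem_erase]
    constructor
    · rintro (⟨h | ⟨_, h⟩⟩ | ⟨h | ⟨_, h⟩⟩) <;> tauto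
    · rintro (h | h)
      · tauto
      · by_cases hyx : y = x
        · subst hyx; right; right; exact ⟨hxx', h⟩
        · left; right; exact ⟨hyx, h⟩
  have hinterr : insert z (I.erase x) ∩ insert z (I.erase x') = insert z ((I.erase x).erase x') := by
    ext y
    simp only [Finset.mem_inter, Finset.mem_insert, Finset.mem_erase]
    tauto
  have hsub := M.rk_submodular (insert z (I.erase x)) (insert z (I.erase x'))
  rw [hunion, hinterr, h1, h2, M.rk_of_indep hIx, M.rk_of_indep hIx'] at hsub
  have hrI : M.rk (insert z I) ≥ I.card := by
    rw [← M.rk_of_indep hI]; exact M.rk_mono (Finset.subset_insert _ _)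
  have hge : M.rk (insert z ((I.erase x).erase x')) ≥ M.rk ((I.erase x).erase x') :=
    M.rk_mono (Finset.subset_insert _ _)
  have hle2 : M.rk ((I.erase x).erase x') = I.card - 2 := by
    rw [M.rk_of_indep hIxx', hcxx']
  have hIcard : 2 ≤ I.card := by
    have : ({x, x'} : Finset α) ⊆ I := by
      intro y hy; rcases Finset.mem_insert.1 hy with h | h
      · exact h ▸ hx
      · exact (Finset.mem_singleton.1 h) ▸ hx'
    have := Finset.card_le_card this
    rwa [Finset.card_insert_of_notMem (by simp [hxx']), Finset.card_singleton] at this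
  omega

end PaperMatroid

section Partition

variable {α : Type*} [DecidableEq α] [Fintype α] {m : ℕ}

/-- `K` is a partition of the ground set into independent sets. -/
def IsPart (Ms : Fin (m + 1) → PaperMatroid α) (K : Fin (m + 1) → Finset α) : Prop :=
  (∀ i j, i ≠ j → Disjoint (K i) (K j)) ∧ (∀ a : α, ∃ i, a ∈ K i) ∧
    (∀ i, (Ms i).Indep (K i))

/-- Exchange arc: `u` can replace `v` in the (non-last) part containing `v`. -/
def Arc (Ms : Fin (m + 1) → PaperMatroid α) (K : Fin (m + 1) → Finset α) (u v : α) : Prop :=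
  ∃ i : Fin m, v ∈ K i.castSucc ∧ u ∉ K i.castSucc ∧
    (Ms i.castSucc).Indep (insert u ((K i.castSucc).erase v))

lemma IsPart.mem_unique {Ms : Fin (m + 1) → PaperMatroid α} {K : Fin (m + 1) → Finset α}
    (hK : IsPart Ms K) {x : α} {i j : Fin (m + 1)} (hi : x ∈ K i) (hj : x ∈ K j) : i = j := by
  by_contra h
  exact Finset.disjoint_left.mp (hK.1 i j h) hi hj

lemma isPart_swap {Ms : Fin (m + 1) → PaperMatroid α} {K : Fin (m + 1) → Finset α}
    (hK : IsPart Ms K) {p q : Fin (m + 1)} (hpq : p ≠ q) {a b : α}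
    (ha : a ∈ K p) (hb : b ∈ K q)
    (h1 : (Ms p).Indep (insert b ((K p).erase a)))
    (h2 : (Ms q).Indep (insert a ((K q).erase b))) :
    IsPart Ms (fun j => if j = p then insert b ((K p).erase a)
      else if j = q then insert a ((K q).erase b) else K j) := by
  have hab : a ≠ b := by
    intro h
    exact hpq (hK.mem_unique ha (h ▸ hb))
  have hmem : ∀ x j, (x ∈ (if j = p then insert b ((K p).erase a)
      else if j = q then insert a ((K q).erase b) else K j)) →
      (x = b ∧ j = p) ∨ (x = a ∧ j = q) ∨ (x ∈ K j ∧ x ≠ a ∧ x ≠ b) := by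
    intro x j hx
    split_ifs at hx with hjp hjq
    · subst hjp
      rcases Finset.mem_insert.1 hx with h | h
      · exact Or.inl ⟨h, rfl⟩
      · right; right
        refine ⟨Finset.mem_of_mem_erase h, Finset.ne_of_mem_erase h, ?_⟩
        intro hxb; subst hxb
        exact hpq (hK.mem_unique (Finset.mem_of_mem_erase h) hb)
    · subst hjq
      rcases Finset.mem_insert.1 hx with h | h
      · exact Or.inr (Or.inl ⟨h, rfl⟩)
      · right; right
        refine ⟨Finset.mem_of_mem_erase h, ?_, Finset.ne_of_mem_erase h⟩
        intro hxa; subst hxa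
        exact hpq (hK.mem_unique ha (Finset.mem_of_mem_erase h))
    · right; right
      refine ⟨hx, ?_, ?_⟩
      · intro hxa; subst hxa; exact hjp (hK.mem_unique hx ha)
      · intro hxb; subst hxb; exact hjq (hK.mem_unique hx hb)
  refine ⟨?_, ?_, ?_⟩
  · intro i j hij
    rw [Finset.disjoint_left]
    intro x hxi hxj
    rcases hmem x i hxi with ⟨hx, hi⟩ | ⟨hx, hi⟩ | ⟨hx, hxa, hxb⟩ <;>
      rcases hmem x j hxj with ⟨hx', hj⟩ | ⟨hx', hj⟩ | ⟨hx', hxa', hxb'⟩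
    · exact hij (hi.trans hj.symm)
    · exact hab (hx'.symm.trans hx)
    · exact hxb' hx
    · exact hab (hx.symm.trans hx')
    · exact hij (hi.trans hj.symm)
    · exact hxa' hx
    · exact hxb hx'
    · exact hxa hx'
    · exact hij (hK.mem_unique hx hx')
  · intro x
    obtain ⟨i, hi⟩ := hK.2.1 x
    by_cases hxa : x = a
    · refine ⟨q, ?_⟩
      have : q ≠ p := hpq.symm
      simp [this, hxa]
    · by_cases hxb : x = b
      · exact ⟨p, by simp [hxb]⟩
      · refine ⟨i, ?_⟩
        show x ∈ if i = p then _ else if i = q then _ else K i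
        split_ifs with hip hiq
        · subst hip
          exact Finset.mem_insert_of_mem (Finset.mem_erase.2 ⟨hxa, hi⟩)
        · subst hiq
          exact Finset.mem_insert_of_mem (Finset.mem_erase.2 ⟨hxb, hi⟩)
        · exact hi
  · intro i
    show (Ms i).Indep (if i = p then _ else if i = q then _ else K i)
    split_ifs with hip hiq
    · subst hip; exact h1
    · subst hiq; exact h2
    · exact hK.2.2 i

end Partition
namespace PaperMatroid

variable {α : Type*} [DecidableEq α] [Fintype α] (M : PaperMatroid α)

/-- Core lemma (A): the tail arc survives the first swap. -/
lemma core_A {B : Finset α} (hB : M.Indep B) {w0 w1 wt wt1 : α}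
    (hw1B : w1 ∈ B) (hwt1B : wt1 ∈ B) (hw0B : w0 ∉ B) (hwtB : wt ∉ B)
    (h01 : w0 ≠ w1) (h0t : w0 ≠ wt) (h0t1 : w0 ≠ wt1) (h1t : w1 ≠ wt) (h1t1 : w1 ≠ wt1)
    (htt1 : wt ≠ wt1)
    (hA0 : M.Indep (insert w0 (B.erase w1)))
    (hAt : M.Indep (insert wt (B.erase wt1)))
    (hdep : ¬ M.Indep (insert w0 (B.erase wt1))) :
    M.Indep (insert w0 (insert wt ((B.erase w1).erase wt1))) := by
  by_contra hc
  set B' := insert wt (B.erase wt1) with hB'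
  have hB'i : M.Indep B' := hAt
  have hS : B'.erase w1 = insert wt ((B.erase w1).erase wt1) := by
    ext y
    simp only [hB', Finset.mem_erase, Finset.mem_insert]
    constructor
    · rintro ⟨hy1, hy | ⟨hyt1, hyB⟩⟩
      · exact Or.inl hy
      · exact Or.inr ⟨hyt1, hy1, hyB⟩
    · rintro (hy | ⟨hyt1, hy1, hyB⟩)
      · exact ⟨hy ▸ h1t.symm, Or.inl hy⟩
      · exact ⟨hy1, Or.inr ⟨hyt1, hyB⟩⟩
  have hSi : M.Indep (B'.erase w1) := M.subset_closed hB'i (Finset.erase_subset _ _)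
  have hsp1 : M.Spans (B'.erase w1) w0 := by
    apply M.spans_of_dep_insert hSi
    rw [hS]
    exact hc
  have hB'wt : B'.erase wt = B.erase wt1 := by
    rw [hB', Finset.erase_insert]
    simp only [Finset.mem_erase]
    tauto
  have hsp2 : M.Spans (B'.erase wt) w0 := by
    rw [hB'wt]
    exact M.spans_of_dep_insert (M.subset_closed hB (Finset.erase_subset _ _)) hdep
  have hw1B' : w1 ∈ B' := Finset.mem_insert_of_mem (Finset.mem_erase.2 ⟨h1t1, hw1B⟩)
  have hwtB' : wt ∈ B' := Finset.mem_insert_self _ _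
  have hw0B' : w0 ∉ B' := by
    simp only [hB', Finset.mem_insert, Finset.mem_erase]
    push_neg
    exact ⟨h0t, fun _ => hw0B⟩
  have hY := M.spans_sdiff_pair hB'i hw1B' hwtB' h1t hw0B' hsp1 hsp2
  have heq : (B'.erase w1).erase wt = (B.erase w1).erase wt1 := by
    rw [hS, Finset.erase_insert]
    simp only [Finset.mem_erase]
    tauto
  rw [heq] at hY
  have : M.Spans (B.erase w1) w0 :=
    M.spans_mono (Finset.erase_subset _ _) hY
  exact M.dep_insert_of_spans (M.subset_closed hB (Finset.erase_subset _ _))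
    (by simp only [Finset.mem_erase]; tauto) this hA0

/-- Core lemma (B): no new shortcuts appear after the first swap. -/
lemma core_B {B : Finset α} (hB : M.Indep B) {w0 w1 wS wT : α}
    (hw1B : w1 ∈ B) (hwTB : wT ∈ B) (hw0B : w0 ∉ B) (hwSB : wS ∉ B)
    (h01 : w0 ≠ w1) (h0S : w0 ≠ wS) (h0T : w0 ≠ wT) (h1S : w1 ≠ wS) (h1T : w1 ≠ wT)
    (hST : wS ≠ wT)
    (hdep0T : ¬ M.Indep (insert w0 (B.erase wT)))
    (hQ : M.Indep (insert w0 (insert wS ((B.erase w1).erase wT)))) :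
    M.Indep (insert wS (B.erase wT)) := by
  set P := insert wS ((B.erase w1).erase wT) with hP
  have hPi : M.Indep P := M.subset_closed hQ (Finset.subset_insert _ _)
  have hw0P : w0 ∉ P := by
    simp only [hP, Finset.mem_insert, Finset.mem_erase]
    push_neg
    exact ⟨h0S, fun _ _ => hw0B⟩
  have hnsp : ¬ M.Spans P w0 := (M.indep_insert_iff hPi hw0P).1 hQ
  have hrw : insert w1 P = insert wS (B.erase wT) := by
    ext y
    simp only [hP, Finset.mem_insert, Finset.mem_erase]
    constructor
    · rintro (hy | hy | ⟨hyT, hy1, hyB⟩)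
      · exact Or.inr ⟨hy ▸ h1T, hy ▸ hw1B⟩
      · exact Or.inl hy
      · exact Or.inr ⟨hyT, hyB⟩
    · rintro (hy | ⟨hyT, hyB⟩)
      · exact Or.inr (Or.inl hy)
      · by_cases hy1 : y = w1
        · exact Or.inl hy1
        · exact Or.inr (Or.inr ⟨hyT, hy1, hyB⟩)
  rw [← hrw]
  by_contra hc
  have hsp1 : M.Spans P w1 := M.spans_of_dep_insert hPi hc
  have hsub : B.erase wT ⊆ insert w1 P := by
    intro y hy
    rw [hrw]
    exact Finset.mem_insert_of_mem hy
  have hsp0 : M.Spans (insert w1 P) w0 :=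
    M.spans_mono hsub (M.spans_of_dep_insert (M.subset_closed hB (Finset.erase_subset _ _)) hdep0T)
  exact hnsp (M.spans_insert_eq hsp1 hsp0)

end PaperMatroid

section KeyLemma

variable {α : Type*} [DecidableEq α] [Fintype α] {m l : ℕ}

lemma key_lemma (Ms : Fin (m + 1) → PaperMatroid α)
    (huni : ∀ I : Finset α, (Ms (Fin.last m)).Indep I ↔ I.card ≤ l) :
    ∀ k : ℕ, ∀ K : Fin (m + 1) → Finset α, IsPart Ms K → ∀ w : ℕ → α,
      (∀ s t, s ≤ k → t ≤ k → w s = w t → s = t) →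
      w 0 ∈ K (Fin.last m) →
      (∀ t, t < k → Arc Ms K (w t) (w (t + 1))) →
      (∀ s t, t ≤ k → s + 1 < t → ¬ Arc Ms K (w s) (w t)) →
      ∃ L, IsPart Ms L ∧ w k ∈ L (Fin.last m) := by
  intro k
  induction k with
  | zero =>
    intro K hK w _ h0 _ _
    exact ⟨K, hK, h0⟩
  | succ k IH =>
    intro K hK w hinj h0 harc hshort
    have hwne : ∀ a b : ℕ, a ≤ k + 1 → b ≤ k + 1 → a ≠ b → w a ≠ w b :=
      fun a b ha hb hab he => hab (hinj a b ha hb he)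
    obtain ⟨i1, hw1, hw0, hind⟩ := harc 0 (Nat.succ_pos k)
    set p := i1.castSucc with hp
    have hpq : p ≠ Fin.last m := (Fin.castSucc_lt_last i1).ne
    have hw0last : w 0 ∈ K (Fin.last m) := h0
    have hlastcard : (K (Fin.last m)).card ≤ l := (huni _).1 (hK.2.2 _)
    have h2 : (Ms (Fin.last m)).Indep (insert (w 1) ((K (Fin.last m)).erase (w 0))) := by
      rw [huni]
      have hc1 := Finset.card_erase_of_mem hw0last
      have hc2 := Finset.card_insert_le (w 1) ((K (Fin.last m)).erase (w 0))
      have : 1 ≤ (K (Fin.last m)).card := Finset.card_pos.2 ⟨w 0, hw0last⟩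
      omega
    have hK' := isPart_swap hK hpq hw1 h0 hind h2
    set K' : Fin (m + 1) → Finset α := fun j => if j = p then insert (w 0) ((K p).erase (w 1))
      else if j = Fin.last m then insert (w 1) ((K (Fin.last m)).erase (w 0)) else K j with hK'def
    have hK'p : K' p = insert (w 0) ((K p).erase (w 1)) := by simp [hK'def]
    have hK'last : K' (Fin.last m) = insert (w 1) ((K (Fin.last m)).erase (w 0)) := by
      simp [hK'def, Ne.symm hpq]
    have hK'other : ∀ j : Fin m, j.castSucc ≠ p → K' j.castSucc = K j.castSucc := by
      intro j hj
      simp [hK'def, hj, (Fin.castSucc_lt_last j).ne]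
    -- apply IH to the shifted path
    have hres := IH K' hK' (fun t => w (t + 1))
      (fun s t hs ht he => by
        have := hinj (s + 1) (t + 1) (by omega) (by omega) he
        omega)
      (by rw [hK'last]; exact Finset.mem_insert_self _ _)
      ?_ ?_
    · obtain ⟨L, hL, hLlast⟩ := hres
      exact ⟨L, hL, hLlast⟩
    -- arcs survive the swap
    · intro t ht
      obtain ⟨j, hmemj, hnmemj, hindj⟩ := harc (t + 1) (by omega)
      by_cases hjp : j.castSucc = p
      · rw [hjp] at hmemj hnmemj hindj
        have ht1 : 1 ≤ t := by
          rcases Nat.eq_zero_or_pos t with rfl | h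
          · exact absurd hw1 hnmemj
          · exact h
        refine ⟨i1, ?_, ?_, ?_⟩
        · rw [← hp, hK'p]
          exact Finset.mem_insert_of_mem
            (Finset.mem_erase.2 ⟨hwne (t + 2) 1 (by omega) (by omega) (by omega), hmemj⟩)
        · rw [← hp, hK'p]
          simp only [Finset.mem_insert, Finset.mem_erase]
          push_neg
          exact ⟨hwne (t + 1) 0 (by omega) (by omega) (by omega), fun _ => hnmemj⟩
        · rw [← hp, hK'p]
          have hdep : ¬ (Ms p).Indep (insert (w 0) ((K p).erase (w (t + 2)))) := by
            intro hcon
            exact hshort 0 (t + 2) (by omega) (by omega) ⟨i1, hmemj, hw0, hcon⟩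
          have hcore := (Ms p).core_A (hK.2.2 p) hw1 hmemj hw0 hnmemj
            (hwne 0 1 (by omega) (by omega) (by omega))
            (hwne 0 (t + 1) (by omega) (by omega) (by omega))
            (hwne 0 (t + 2) (by omega) (by omega) (by omega))
            (hwne 1 (t + 1) (by omega) (by omega) (by omega))
            (hwne 1 (t + 2) (by omega) (by omega) (by omega))
            (hwne (t + 1) (t + 2) (by omega) (by omega) (by omega))
            hind hindj hdep
          have heq : (insert (w 0) ((K p).erase (w 1))).erase (w (t + 2)) =
              insert (w 0) (((K p).erase (w 1)).erase (w (t + 2))) := by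
            rw [Finset.erase_insert_of_ne (hwne (t + 2) 0 (by omega) (by omega) (by omega)).symm]
          rw [heq, Finset.insert_comm]
          exact hcore
      · refine ⟨j, ?_⟩
        rw [hK'other j hjp]
        exact ⟨hmemj, hnmemj, hindj⟩
    -- no shortcuts appear
    · rintro s t ht hst ⟨j, hmemj, hnmemj, hindj⟩
      by_cases hjp : j.castSucc = p
      · rw [hjp] at hmemj hnmemj hindj
        rw [hK'p] at hmemj hnmemj hindj
        have hmem2 : w (t + 1) ∈ K p := by
          rcases Finset.mem_insert.1 hmemj with h | h
          · exact absurd h (hwne (t + 1) 0 (by omega) (by omega) (by omega))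
          · exact Finset.mem_of_mem_erase h
        have hT1 : w (t + 1) ≠ w 1 := hwne (t + 1) 1 (by omega) (by omega) (by omega)
        have hdep0T : ¬ (Ms p).Indep (insert (w 0) ((K p).erase (w (t + 1)))) := by
          intro hcon
          exact hshort 0 (t + 1) (by omega) (by omega) ⟨i1, hmem2, hw0, hcon⟩
        by_cases hs0 : s = 0
        · subst hs0
          have heq : insert (w 1) ((insert (w 0) ((K p).erase (w 1))).erase (w (t + 1))) =
              insert (w 0) ((K p).erase (w (t + 1))) := by
            have h1T : w 1 ≠ w (t + 1) := hwne 1 (t + 1) (by omega) (by omega) (by omega)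
            have h0T : w 0 ≠ w (t + 1) := hwne 0 (t + 1) (by omega) (by omega) (by omega)
            ext y
            simp only [Finset.mem_insert, Finset.mem_erase]
            constructor
            · rintro (rfl | ⟨hyT, rfl | ⟨hy1, hyB⟩⟩)
              · exact Or.inr ⟨h1T, hw1⟩
              · exact Or.inl rfl
              · exact Or.inr ⟨hyT, hyB⟩
            · rintro (rfl | ⟨hyT, hyB⟩)
              · exact Or.inr ⟨h0T, Or.inl rfl⟩
              · by_cases hy1 : y = w 1
                · exact Or.inl hy1
                · exact Or.inr ⟨hyT, Or.inr ⟨hy1, hyB⟩⟩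
          rw [heq] at hindj
          exact hdep0T hindj
        · have hS1 : w (s + 1) ≠ w 1 := hwne (s + 1) 1 (by omega) (by omega) (by omega)
          have hSnB : w (s + 1) ∉ K p := by
            simp only [Finset.mem_insert, Finset.mem_erase] at hnmemj
            push_neg at hnmemj
            exact fun hc => (hnmemj.2 hS1) hc
          have heq : insert (w (s + 1)) ((insert (w 0) ((K p).erase (w 1))).erase (w (t + 1))) =
              insert (w 0) (insert (w (s + 1)) (((K p).erase (w 1)).erase (w (t + 1)))) := by
            rw [Finset.erase_insert_of_ne (hwne (t + 1) 0 (by omega) (by omega) (by omega)).symm]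
            rw [Finset.insert_comm]
          rw [heq] at hindj
          have hcore := (Ms p).core_B (hK.2.2 p) hw1 hmem2 hw0 hSnB
            (hwne 0 1 (by omega) (by omega) (by omega))
            (hwne 0 (s + 1) (by omega) (by omega) (by omega))
            (hwne 0 (t + 1) (by omega) (by omega) (by omega))
            (hwne 1 (s + 1) (by omega) (by omega) (by omega))
            (hwne 1 (t + 1) (by omega) (by omega) (by omega))
            (hwne (s + 1) (t + 1) (by omega) (by omega) (by omega))
            hdep0T hindj
          exact hshort (s + 1) (t + 1) (by omega) (by omega) ⟨i1, hmem2, hSnB, hcore⟩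
      · rw [hK'other j hjp] at hmemj hnmemj hindj
        exact hshort (s + 1) (t + 1) (by omega) (by omega) ⟨j, hmemj, hnmemj, hindj⟩

end KeyLemma

section Counting

variable {α : Type*} [DecidableEq α] [Fintype α] {m l : ℕ}

lemma sum_card_parts {Ms : Fin (m + 1) → PaperMatroid α} {K : Fin (m + 1) → Finset α}
    (hK : IsPart Ms K) (A : Finset α) :
    ∑ i, (K i ∩ A).card = A.card := by
  classical
  have hbu : Finset.univ.biUnion (fun i => K i ∩ A) = A := by
    ext x
    simp only [Finset.mem_biUnion, Finset.mem_inter, Finset.mem_univ, true_and]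
    constructor
    · rintro ⟨i, _, hx⟩; exact hx
    · intro hx
      obtain ⟨i, hi⟩ := hK.2.1 x
      exact ⟨i, hi, hx⟩
  have hdisj' : ∀ i ∈ Finset.univ, ∀ j ∈ Finset.univ, i ≠ j →
      Disjoint (K i ∩ A) (K j ∩ A) := fun i _ j _ hij =>
    (hK.1 i j hij).mono Finset.inter_subset_left Finset.inter_subset_left
  calc ∑ i, (K i ∩ A).card = (Finset.univ.biUnion fun i => K i ∩ A).card :=
        (Finset.card_biUnion hdisj').symm
    _ = A.card := by rw [hbu]

lemma mem_G_analysis (Ms : Fin (m + 1) → PaperMatroid α)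
    (huni : ∀ I : Finset α, (Ms (Fin.last m)).Indep I ↔ I.card ≤ l)
    (r : Fin m → Finset α → ℕ)
    (hr : ∀ i (A I : Finset α), (Ms i.castSucc).MaxIndepIn A I → I.card = r i A)
    {K : Fin (m + 1) → Finset α} (hK : IsPart Ms K)
    {A : Finset α} (hA : A.card = l + ∑ i, r i A) :
    (K (Fin.last m) ∩ A).card = l ∧ K (Fin.last m) ⊆ A ∧
      ∀ i : Fin m, (K i.castSucc ∩ A).card = r i A := by
  classical
  have r_eq : ∀ (i : Fin m) (B : Finset α), r i B = (Ms i.castSucc).rk B := by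
    intro i B
    obtain ⟨J, hJ⟩ := (Ms i.castSucc).exists_maxIndepIn B
    exact (hr i B J hJ).symm.trans ((Ms i.castSucc).maxIndepIn_card hJ)
  have hsum : ∑ i, (K i ∩ A).card = A.card := sum_card_parts hK A
  set f : Fin (m + 1) → ℕ := fun i => (K i ∩ A).card with hf
  set g : Fin (m + 1) → ℕ := fun i => Fin.lastCases l (fun j => r j A) i with hg
  have hle : ∀ i ∈ Finset.univ, f i ≤ g i := by
    intro i _
    induction i using Fin.lastCases with
    | last =>
      simp only [hf, hg, Fin.lastCases_last]
      calc (K (Fin.last m) ∩ A).card ≤ (K (Fin.last m)).card :=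
            Finset.card_le_card Finset.inter_subset_left
        _ ≤ l := (huni _).1 (hK.2.2 _)
    | cast j =>
      simp only [hf, hg, Fin.lastCases_castSucc]
      rw [r_eq]
      exact (Ms j.castSucc).card_le_rk Finset.inter_subset_right
        ((Ms j.castSucc).subset_closed (hK.2.2 _) Finset.inter_subset_left)
  have hgsum : ∑ i, g i = l + ∑ j, r j A := by
    rw [Fin.sum_univ_castSucc]
    simp only [hg, Fin.lastCases_castSucc, Fin.lastCases_last]
    omega
  have heq : ∀ i ∈ Finset.univ, f i = g i := by
    rw [← Finset.sum_eq_sum_iff_of_le hle]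
    rw [hsum, hA, hgsum]
  have hlast : (K (Fin.last m) ∩ A).card = l := by
    have := heq (Fin.last m) (Finset.mem_univ _)
    simpa [hf, hg] using this
  refine ⟨hlast, ?_, ?_⟩
  · have hsub : K (Fin.last m) ∩ A = K (Fin.last m) := by
      apply Finset.eq_of_subset_of_card_le Finset.inter_subset_left
      rw [hlast]
      exact (huni _).1 (hK.2.2 _)
    intro x hx
    rw [← hsub] at hx
    exact Finset.mem_of_mem_inter_right hx
  · intro i
    have := heq i.castSucc (Finset.mem_univ _)
    simpa [hf, hg] using this

end Counting

/-- With the set-up of Theorem 2.6 and `l ≥ 1`: the unique minimal element `Amin` of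
`G` equals the set of elements `b` lying in the part `I (last)` (the part independent
for the uniform matroid of rank `l`) of some partition of `E` into independent sets. -/
theorem Amin_eq_Apar {α : Type*} [DecidableEq α] [Fintype α]
    (m l : ℕ) (hl : l ≤ Fintype.card α) (hl1 : 1 ≤ l)
    (Ms : Fin (m + 1) → PaperMatroid α)
    (huni : ∀ I : Finset α, (Ms (Fin.last m)).Indep I ↔ I.card ≤ l)
    (r : Fin m → Finset α → ℕ)
    (hr : ∀ i (A I : Finset α), (Ms i.castSucc).MaxIndepIn A I → I.card = r i A)
    (I : Fin (m + 1) → Finset α)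
    (hdisj : ∀ i j, i ≠ j → Disjoint (I i) (I j))
    (hcover : ∀ a : α, ∃ i, a ∈ I i)
    (hindep : ∀ i, (Ms i).Indep (I i))
    (G : Set (Finset α)) (hG : G = {A : Finset α | A.card = l + ∑ i, r i A})
    (hE : (Finset.univ : Finset α) ∈ G)
    (Amin : Finset α) (hmemb : Amin ∈ G) (hmin : ∀ B ∈ G, Amin ⊆ B) :
    ∀ b : α, b ∈ Amin ↔
      ∃ K : Fin (m + 1) → Finset α,
        (∀ i j, i ≠ j → Disjoint (K i) (K j)) ∧
        (∀ a : α, ∃ i, a ∈ K i) ∧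
        (∀ i, (Ms i).Indep (K i)) ∧
        b ∈ K (Fin.last m) := by
  classical
  have hKpart : IsPart Ms I := ⟨hdisj, hcover, hindep⟩
  rw [hG] at hE hmemb
  simp only [Set.mem_setOf_eq] at hE hmemb
  have r_eq : ∀ (i : Fin m) (B : Finset α), r i B = (Ms i.castSucc).rk B := by
    intro i B
    obtain ⟨J, hJ⟩ := (Ms i.castSucc).exists_maxIndepIn B
    exact (hr i B J hJ).symm.trans ((Ms i.castSucc).maxIndepIn_card hJ)
  obtain ⟨hEl, _, hEparts⟩ := mem_G_analysis Ms huni r hr hKpart hE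
  have hIlast_card : (I (Fin.last m)).card = l := by
    rw [← hEl, Finset.inter_univ]
  have hbase : ∀ i : Fin m, (Ms i.castSucc).MaxIndepIn Finset.univ (I i.castSucc) := by
    intro i
    apply (Ms i.castSucc).maxIndepIn_of_card (Finset.subset_univ _) (hindep _)
    have h := hEparts i
    rw [Finset.inter_univ] at h
    rw [h, r_eq]
  -- reachability from the last part
  set Reach : α → Prop := fun x => ∃ n : ℕ, ∃ w : ℕ → α, w 0 ∈ I (Fin.last m) ∧
      (∀ t, t < n → Arc Ms I (w t) (w (t + 1))) ∧ w n = x with hReach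
  set R : Finset α := Finset.univ.filter Reach with hRdef
  have hmemR : ∀ x, x ∈ R ↔ Reach x := fun x => by simp [hRdef]
  have hIlastR : I (Fin.last m) ⊆ R := by
    intro x hx
    rw [hmemR]
    exact ⟨0, fun _ => x, hx, fun t ht => absurd ht (Nat.not_lt_zero t), rfl⟩
  have hRstep : ∀ y x, Reach y → Arc Ms I y x → Reach x := by
    rintro y x ⟨n, w, h0, harcs, hend⟩ harc
    refine ⟨n + 1, fun t => if t ≤ n then w t else x, by simpa using h0, ?_, by simp⟩
    intro t ht
    by_cases htn : t < n
    · simp only [if_pos (le_of_lt htn), if_pos (by omega : t + 1 ≤ n)]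
      exact harcs t htn
    · have hteq : t = n := by omega
      subst hteq
      simp only [if_pos (le_refl t), if_neg (by omega : ¬ t + 1 ≤ t)]
      rw [hend]
      exact harc
  have hRmax : ∀ i : Fin m, (Ms i.castSucc).MaxIndepIn R (I i.castSucc ∩ R) := by
    intro i
    refine ⟨Finset.inter_subset_right,
      (Ms i.castSucc).subset_closed (hindep _) Finset.inter_subset_left, ?_⟩
    intro J hJR hJind hsubJ
    by_contra hne
    have hns : ¬ (J ⊆ I i.castSucc ∩ R) := fun h => hne (Finset.Subset.antisymm h hsubJ)
    obtain ⟨y, hyJ, hynI⟩ := Finset.not_subset.1 hns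
    have hyR : y ∈ R := hJR hyJ
    have hyI : y ∉ I i.castSucc := fun h => hynI (Finset.mem_inter.2 ⟨h, hyR⟩)
    have hSind : (Ms i.castSucc).Indep (insert y (I i.castSucc ∩ R)) :=
      (Ms i.castSucc).subset_closed hJind (Finset.insert_subset hyJ hsubJ)
    obtain ⟨J', hSJ', hJ'⟩ := (Ms i.castSucc).exists_maxIndepIn_superset
      (show insert y (I i.castSucc ∩ R) ⊆ insert y (I i.castSucc) from
        Finset.insert_subset_insert _ Finset.inter_subset_left) hSind
    have hImax : (Ms i.castSucc).MaxIndepIn (insert y (I i.castSucc)) (I i.castSucc) := by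
      refine ⟨Finset.subset_insert _ _, hindep _, ?_⟩
      intro J'' h1 h2 h3
      exact (hbase i).2.2 J'' (Finset.subset_univ _) h2 h3
    have hcard : J'.card = (I i.castSucc).card :=
      (Ms i.castSucc).max_card_eq _ _ _ hJ'.1 hJ'.2.1 hJ'.2.2 hImax.1 hImax.2.1 hImax.2.2
    have hyJ' : y ∈ J' := hSJ' (Finset.mem_insert_self _ _)
    have hJe : J'.erase y ⊆ I i.castSucc := by
      intro z hz
      rcases Finset.mem_insert.1 (hJ'.1 (Finset.mem_of_mem_erase hz)) with h | h
      · exact absurd h (Finset.ne_of_mem_erase hz)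
      · exact h
    have h1le : 1 ≤ (I i.castSucc).card := by
      rw [← hcard]
      exact Finset.card_pos.2 ⟨y, hyJ'⟩
    have hJecard : (J'.erase y).card = (I i.castSucc).card - 1 := by
      rw [Finset.card_erase_of_mem hyJ', hcard]
    have hsd : (I i.castSucc \ J'.erase y).card = 1 := by
      rw [Finset.card_sdiff_of_subset hJe, hJecard]
      omega
    obtain ⟨x, hx⟩ := Finset.card_eq_one.1 hsd
    have hxmem : x ∈ I i.castSucc \ J'.erase y := hx ▸ Finset.mem_singleton_self x
    have hxI : x ∈ I i.castSucc := (Finset.mem_sdiff.1 hxmem).1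
    have hxJe : x ∉ J'.erase y := (Finset.mem_sdiff.1 hxmem).2
    have hJerase : J'.erase y = (I i.castSucc).erase x := by
      apply Finset.eq_of_subset_of_card_le
      · intro z hz
        refine Finset.mem_erase.2 ⟨?_, hJe hz⟩
        intro hzx
        rw [hzx] at hz
        exact hxJe hz
      · rw [Finset.card_erase_of_mem hxI, hJecard]
    have hxJ' : x ∉ J' := by
      intro h
      apply hxJe
      refine Finset.mem_erase.2 ⟨?_, h⟩
      intro hxy
      rw [hxy] at hxI
      exact hyI hxI
    have hxR : x ∉ R := by
      intro h
      exact hxJ' (hSJ' (Finset.mem_insert_of_mem (Finset.mem_inter.2 ⟨hxI, h⟩)))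
    have harcyx : Arc Ms I y x := by
      refine ⟨i, hxI, hyI, ?_⟩
      have heq : insert y ((I i.castSucc).erase x) = J' := by
        rw [← hJerase, Finset.insert_erase hyJ']
      rw [heq]
      exact hJ'.2.1
    exact hxR ((hmemR x).2 (hRstep y x ((hmemR y).1 hyR) harcyx))
  have hRG : R.card = l + ∑ i, r i R := by
    have hsum := sum_card_parts hKpart R
    rw [Fin.sum_univ_castSucc] at hsum
    have hlast : (I (Fin.last m) ∩ R).card = l := by
      rw [Finset.inter_eq_left.2 hIlastR, hIlast_card]
    calc R.card = ∑ i : Fin m, (I i.castSucc ∩ R).card + (I (Fin.last m) ∩ R).card :=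
          hsum.symm
      _ = ∑ i : Fin m, r i R + l := by
          rw [hlast]
          congr 1
          exact Finset.sum_congr rfl (fun i _ => hr i R _ (hRmax i))
      _ = l + ∑ i, r i R := Nat.add_comm _ _
  have hAminR : Amin ⊆ R := hmin R (by rw [hG]; exact hRG)
  intro b
  constructor
  · intro hb
    have hbR : ∃ n : ℕ, ∃ w : ℕ → α, w 0 ∈ I (Fin.last m) ∧
        (∀ t, t < n → Arc Ms I (w t) (w (t + 1))) ∧ w n = b := (hmemR b).1 (hAminR hb)
    set n₀ := Nat.find hbR with hn₀
    obtain ⟨w, h0, harcs, hend⟩ := Nat.find_spec hbR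
    have hminp : ∀ n' < n₀, ¬ ∃ w : ℕ → α, w 0 ∈ I (Fin.last m) ∧
        (∀ t, t < n' → Arc Ms I (w t) (w (t + 1))) ∧ w n' = b :=
      fun n' h => Nat.find_min hbR h
    have hinj : ∀ s t, s ≤ n₀ → t ≤ n₀ → w s = w t → s = t := by
      have main : ∀ s t, s < t → t ≤ n₀ → w s = w t → False := by
        intro s t hst htn heq
        by_cases htn' : t = n₀
        · apply hminp s (by omega)
          exact ⟨w, h0, fun u hu => harcs u (by omega),
            heq.trans (by rw [htn']; exact hend)⟩
        · apply hminp (n₀ - (t - s)) (by omega)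
          refine ⟨fun u => if u ≤ s then w u else w (u + (t - s)), by simpa using h0, ?_, ?_⟩
          · intro u hu
            by_cases hus : u < s
            · simp only [if_pos (le_of_lt hus), if_pos (by omega : u + 1 ≤ s)]
              exact harcs u (by omega)
            · by_cases hus' : u = s
              · simp only [if_pos (by omega : u ≤ s), if_neg (by omega : ¬ u + 1 ≤ s)]
                have he : u + 1 + (t - s) = t + 1 := by omega
                rw [he, hus', heq]
                exact harcs t (by omega)
              · simp only [if_neg (by omega : ¬ u ≤ s), if_neg (by omega : ¬ u + 1 ≤ s)]
                have he : u + 1 + (t - s) = (u + (t - s)) + 1 := by omega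
                rw [he]
                exact harcs (u + (t - s)) (by omega)
          · simp only [if_neg (by omega : ¬ (n₀ - (t - s)) ≤ s)]
            have he : n₀ - (t - s) + (t - s) = n₀ := by omega
            rw [he]
            exact hend
      intro s t hs ht heq
      rcases lt_trichotomy s t with h | h | h
      · exact (main s t h ht heq).elim
      · exact h
      · exact (main t s h hs heq.symm).elim
    have hshort : ∀ s t, t ≤ n₀ → s + 1 < t → ¬ Arc Ms I (w s) (w t) := by
      intro s t htn hst harc
      apply hminp (n₀ - (t - (s + 1))) (by omega)
      refine ⟨fun u => if u ≤ s then w u else w (u + (t - s - 1)), by simpa using h0, ?_, ?_⟩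
      · intro u hu
        by_cases hus : u < s
        · simp only [if_pos (le_of_lt hus), if_pos (by omega : u + 1 ≤ s)]
          exact harcs u (by omega)
        · by_cases hus' : u = s
          · simp only [if_pos (by omega : u ≤ s), if_neg (by omega : ¬ u + 1 ≤ s)]
            have he : u + 1 + (t - s - 1) = t := by omega
            rw [he, hus']
            exact harc
          · simp only [if_neg (by omega : ¬ u ≤ s), if_neg (by omega : ¬ u + 1 ≤ s)]
            have he : u + 1 + (t - s - 1) = (u + (t - s - 1)) + 1 := by omega
            rw [he]
            exact harcs (u + (t - s - 1)) (by omega)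
      · simp only [if_neg (by omega : ¬ (n₀ - (t - (s + 1))) ≤ s)]
        have he : n₀ - (t - (s + 1)) + (t - s - 1) = n₀ := by omega
        rw [he]
        exact hend
    obtain ⟨L, hL, hLb⟩ := key_lemma Ms huni n₀ I hKpart w hinj h0 harcs hshort
    rw [hend] at hLb
    exact ⟨L, hL.1, hL.2.1, hL.2.2, hLb⟩
  · rintro ⟨K, h1, h2, h3, hbK⟩
    obtain ⟨_, hsub, _⟩ := mem_G_analysis Ms huni r hr ⟨h1, h2, h3⟩ hmemb
    exact hsub hbK
end

section
/- Let (E,Fᵢ), i=1,...,m, be matroids on a finite set E admitting a partition E = I₁ ∪ ... ∪ I_m with Iᵢ ∈ Fᵢ, where F_m is the uniform matroid of rank l, and suppose |E| = l + Σ_{i=1}^{m-1} rᵢ(E). Then for every such partition, |I_m| = l, and for every A ⊆ E with |A| = l + Σ_{i=1}^{m-1} rᵢ(A) one has I_m ⊆ A. -/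
lemma PaperMatroid.exists_maxIndepIn_s7 {α : Type*} [DecidableEq α] [Fintype α]
    (M : PaperMatroid α) (A : Finset α) :
    ∀ k (I : Finset α), A.card - I.card ≤ k → I ⊆ A → M.Indep I →
      ∃ J, I ⊆ J ∧ M.MaxIndepIn A J := by
  intro k
  induction k with
  | zero =>
    intro I hk hIA hI
    have hcard : A.card ≤ I.card := by omega
    have hIA' : I = A := Finset.eq_of_subset_of_card_le hIA hcard
    refine ⟨I, subset_refl _, hIA, hI, fun J hJA _ hIJ => ?_⟩
    exact Finset.Subset.antisymm (hIA' ▸ hJA) hIJ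
  | succ k ih =>
    intro I hk hIA hI
    by_cases h : ∀ J, J ⊆ A → M.Indep J → I ⊆ J → J = I
    · exact ⟨I, subset_refl _, hIA, hI, h⟩
    · push_neg at h
      obtain ⟨J, hJA, hJ, hIJ, hne⟩ := h
      have hlt : I.card < J.card :=
        Finset.card_lt_card (Finset.ssubset_iff_subset_ne.mpr ⟨hIJ, fun e => hne e.symm⟩)
      have hJc : J.card ≤ A.card := Finset.card_le_card hJA
      obtain ⟨K, hJK, hK⟩ := ih J (by omega) hJA hJ
      exact ⟨K, hIJ.trans hJK, hK⟩

/-- If `|E| = l + Σ_{i<m} rᵢ(E)` and the last matroid is the uniform matroid of rank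
`l`, then in every partition of `E` into independent sets the last part `I (last)` has
cardinality `l`, and `I (last) ⊆ A` for every `A` with `|A| = l + Σ_{i<m} rᵢ(A)`. -/
theorem last_part_card_and_subset {α : Type*} [DecidableEq α] [Fintype α]
    (m l : ℕ)
    (Ms : Fin (m + 1) → PaperMatroid α)
    (huni : ∀ I : Finset α, (Ms (Fin.last m)).Indep I ↔ I.card ≤ l)
    (r : Fin m → Finset α → ℕ)
    (hr : ∀ i (A I : Finset α), (Ms i.castSucc).MaxIndepIn A I → I.card = r i A)
    (hE : Fintype.card α = l + ∑ i, r i Finset.univ) :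
    ∀ I : Fin (m + 1) → Finset α,
      (∀ i j, i ≠ j → Disjoint (I i) (I j)) →
      (∀ a : α, ∃ i, a ∈ I i) →
      (∀ i, (Ms i).Indep (I i)) →
      (I (Fin.last m)).card = l ∧
      ∀ A : Finset α, A.card = l + ∑ i, r i A → I (Fin.last m) ⊆ A := by
  intro I hdisj hcover hind
  -- rank bound for independent subsets
  have card_le_r : ∀ (i : Fin m) (A J : Finset α), J ⊆ A → (Ms i.castSucc).Indep J →
      J.card ≤ r i A := by
    intro i A J hJA hJ
    obtain ⟨K, hJK, hK⟩ := (Ms i.castSucc).exists_maxIndepIn_s7 A (A.card - J.card) J le_rfl hJA hJ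
    have := hr i A K hK
    calc J.card ≤ K.card := Finset.card_le_card hJK
      _ = r i A := this
  -- partition sum
  have hsum : ∀ A : Finset α, ∑ i, (I i ∩ A).card = A.card := by
    intro A
    have hAeq : Finset.univ.biUnion (fun i => I i ∩ A) = A := by
      ext a
      simp only [Finset.mem_biUnion, Finset.mem_univ, Finset.mem_inter, true_and]
      constructor
      · rintro ⟨i, _, ha⟩; exact ha
      · intro ha; obtain ⟨i, hi⟩ := hcover a; exact ⟨i, hi, ha⟩
    have hd : ∀ i ∈ Finset.univ, ∀ j ∈ Finset.univ, i ≠ j →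
        Disjoint (I i ∩ A) (I j ∩ A) := by
      intro i _ j _ hij
      exact Finset.disjoint_of_subset_left Finset.inter_subset_left
        (Finset.disjoint_of_subset_right Finset.inter_subset_left (hdisj i j hij))
    have hc : (Finset.univ.biUnion (fun i => I i ∩ A)).card = A.card := by rw [hAeq]
    rw [← Finset.card_biUnion hd]
    exact hc
  have hkey : ∀ A : Finset α, A.card = l + ∑ i, r i A → (I (Fin.last m) ∩ A).card = l := by
    intro A hA
    have h2 : (I (Fin.last m) ∩ A).card ≤ l :=
      (huni _).mp ((Ms _).subset_closed (hind _) Finset.inter_subset_left)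
    have hsplit : ∑ i : Fin m, (I i.castSucc ∩ A).card + (I (Fin.last m) ∩ A).card
        = A.card := by
      rw [← hsum A, Fin.sum_univ_castSucc]
    have hle : ∑ i : Fin m, (I i.castSucc ∩ A).card ≤ ∑ i, r i A :=
      Finset.sum_le_sum (fun i _ => card_le_r i A _ Finset.inter_subset_right
        ((Ms _).subset_closed (hind _) Finset.inter_subset_left))
    omega
  have hUcard : (Finset.univ : Finset α).card = l + ∑ i, r i Finset.univ := by
    rw [Finset.card_univ]; exact hE
  have hlast : (I (Fin.last m)).card = l := by
    have := hkey Finset.univ hUcard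
    rwa [Finset.inter_univ] at this
  refine ⟨hlast, fun A hA => ?_⟩
  have h := hkey A hA
  have heq : I (Fin.last m) ∩ A = I (Fin.last m) :=
    Finset.eq_of_subset_of_card_le Finset.inter_subset_left (by omega)
  rw [← heq]
  exact Finset.inter_subset_right
end
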